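/- Let G be a finite disconnected simple graph with at least one edge that is {P4, K2 ∪ 2K1}-free. Then the complement Ḡ of G either has a universal vertex or is a complete bipartite graph. -/
import Mathlib


open SimpleGraph

/-- `G` is `H`-free: no induced subgraph of `G` is isomorphic to `H`
(an induced copy is a graph embedding). -/
def InducedFree {α β : Type*} (H : SimpleGraph β) (G : SimpleGraph α) : Prop :=
  ¬ Nonempty (H ↪g G)

/-- The path on four vertices. -/
def P4 : SimpleGraph (Fin 4) := fromEdgeSet {s(0,1), s(1,2), s(2,3)}

/-- `K2 ∪ 2K1`: one edge `0-1` together with two isolated vertices `2,3`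
(the complement of the diamond). -/
def K2u2K1 : SimpleGraph (Fin 4) := fromEdgeSet {s(0,1)}

/-- `G` is a complete bipartite graph: there is a set `A` of vertices such that
two vertices are adjacent exactly when one lies in `A` and the other does not. -/
def IsCompleteBipartite {V : Type*} (G : SimpleGraph V) : Prop :=
  ∃ A : Set V, ∀ u v : V, G.Adj u v ↔ ((u ∈ A ∧ v ∉ A) ∨ (u ∉ A ∧ v ∈ A))

lemma no_codiamond {V : Type*} (G : SimpleGraph V) (hfree : InducedFree K2u2K1 G)
    (a b c d : V) (hab : G.Adj a b)
    (hac : a ≠ c) (had : a ≠ d) (hbc : b ≠ c) (hbd : b ≠ d) (hcd : c ≠ d)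
    (nac : ¬ G.Adj a c) (nad : ¬ G.Adj a d) (nbc : ¬ G.Adj b c) (nbd : ¬ G.Adj b d)
    (ncd : ¬ G.Adj c d) : False := by
  apply hfree
  have hinj : Function.Injective ![a,b,c,d] := by
    intro i j hij
    fin_cases i <;> fin_cases j <;> simp_all [hab.ne, hab.ne']
  refine ⟨⟨⟨![a,b,c,d], hinj⟩, ?_⟩⟩
  intro i j
  fin_cases i <;> fin_cases j <;>
    simp_all [K2u2K1, Sym2.eq, Sym2.rel_iff', Prod.ext_iff, hab.symm, G.adj_comm]

theorem disconnected_P4_codiamond_free {V : Type*} [Fintype V]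
    (G : SimpleGraph V) (hdisc : ¬ G.Connected)
    (hedge : ∃ u v : V, G.Adj u v)
    (hP4 : InducedFree P4 G) (hfree : InducedFree K2u2K1 G) :
    (∃ u : V, ∀ v : V, v ≠ u → Gᶜ.Adj u v) ∨ IsCompleteBipartite Gᶜ := by
  classical
  obtain ⟨u, v, huv⟩ := hedge
  by_cases hiso : ∃ z : V, ∀ w : V, ¬ G.Adj z w
  · obtain ⟨z, hz⟩ := hiso
    exact Or.inl ⟨z, fun w hw => (G.compl_adj z w).mpr ⟨hw.symm, hz w⟩⟩
  push_neg at hiso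
  right
  set A : Set V := {w | G.Reachable u w} with hA
  have hpre : ¬ G.Preconnected := fun h => hdisc ((G.connected_iff).mpr ⟨h, ⟨u⟩⟩)
  have hz : ∃ z : V, z ∉ A := by
    by_contra h
    push_neg at h
    exact hpre fun a b => (h a).symm.trans (h b)
  obtain ⟨z, hzA⟩ := hz
  obtain ⟨z', hzz'⟩ := hiso z
  have hz'A : z' ∉ A := fun h => hzA (h.trans hzz'.symm.reachable)
  have cross : ∀ w x : V, w ∈ A → x ∉ A → ¬ G.Adj w x := fun w x hw hx hadj =>
    hx (hw.trans hadj.reachable)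
  have crossne : ∀ w x : V, w ∈ A → x ∉ A → w ≠ x := fun w x hw hx h => hx (h ▸ hw)
  have huA : u ∈ A := Reachable.refl u
  have hvA : v ∈ A := huv.reachable
  refine ⟨A, fun a b => ?_⟩
  rw [compl_adj]
  constructor
  · rintro ⟨hne, hnadj⟩
    by_cases ha : a ∈ A <;> by_cases hb : b ∈ A
    · exact absurd (no_codiamond G hfree z z' a b hzz'
        (Ne.symm (crossne a z ha hzA)) (Ne.symm (crossne b z hb hzA))
        (Ne.symm (crossne a z' ha hz'A)) (Ne.symm (crossne b z' hb hz'A)) hne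
        (fun h => cross a z ha hzA h.symm) (fun h => cross b z hb hzA h.symm)
        (fun h => cross a z' ha hz'A h.symm) (fun h => cross b z' hb hz'A h.symm)
        hnadj) id
    · exact Or.inl ⟨ha, hb⟩
    · exact Or.inr ⟨ha, hb⟩
    · exact absurd (no_codiamond G hfree u v a b huv
        (crossne u a huA ha) (crossne u b huA hb)
        (crossne v a hvA ha) (crossne v b hvA hb) hne
        (cross u a huA ha) (cross u b huA hb)
        (cross v a hvA ha) (cross v b hvA hb) hnadj) id
  · rintro (⟨ha, hb⟩ | ⟨ha, hb⟩)
    · exact ⟨crossne a b ha hb, cross a b ha hb⟩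
    · exact ⟨fun h => (crossne b a hb ha) h.symm,
        fun h => cross b a hb ha h.symm⟩
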